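/- Let G be the subgroup of the 3×3 integer Heisenberg group consisting of upper unitriangular matrices whose (1,2)-entry is even. Then the abelianization of G is isomorphic to ℤ² ⊕ ℤ/2ℤ. -/

import Mathlib

/-- The integer Heisenberg group: 3×3 upper unitriangular integer matrices
`[[1, a, c], [0, 1, b], [0, 0, 1]]`, recorded by their entries `a` (the
(1,2)-entry), `b` (the (2,3)-entry) and `c` (the (1,3)-entry), with the group
law given by matrix multiplication. -/
structure Heisenberg where
  a : ℤ
  b : ℤ
  c : ℤ

namespace Heisenberg

instance : Mul Heisenberg :=
  ⟨fun x y => ⟨x.a + y.a, x.b + y.b, x.c + y.c + x.a * y.b⟩⟩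

instance : One Heisenberg := ⟨⟨0, 0, 0⟩⟩

instance : Inv Heisenberg := ⟨fun x => ⟨-x.a, -x.b, x.a * x.b - x.c⟩⟩

lemma mul_def (x y : Heisenberg) :
    x * y = ⟨x.a + y.a, x.b + y.b, x.c + y.c + x.a * y.b⟩ := rfl

lemma one_def : (1 : Heisenberg) = ⟨0, 0, 0⟩ := rfl

lemma inv_def (x : Heisenberg) : x⁻¹ = ⟨-x.a, -x.b, x.a * x.b - x.c⟩ := rfl

instance : Group Heisenberg where
  mul_assoc x y z := by
    simp only [mul_def, mk.injEq]
    refine ⟨by ring, by ring, by ring⟩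
  one_mul x := by
    cases x
    simp only [mul_def, one_def, mk.injEq]
    refine ⟨by ring, by ring, by ring⟩
  mul_one x := by
    cases x
    simp only [mul_def, one_def, mk.injEq]
    refine ⟨by ring, by ring, by ring⟩
  inv_mul_cancel x := by
    cases x
    simp only [mul_def, inv_def, one_def, mk.injEq]
    refine ⟨by ring, by ring, by ring⟩

/-- The index-2 subgroup of the Heisenberg group consisting of the matrices
whose (1,2)-entry is even. -/
def evenSubgroup : Subgroup Heisenberg where
  carrier := {x | Even x.a}
  one_mem' := ⟨0, rfl⟩
  mul_mem' := by
    rintro x y ⟨r, hr⟩ ⟨s, hs⟩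
    exact ⟨r + s, by show x.a + y.a = _; omega⟩
  inv_mem' := by
    rintro x ⟨r, hr⟩
    exact ⟨-r, by show -x.a = _; omega⟩

end Heisenberg

/-!
Dividing the (1,2)-entry by two, the map `(a, b, c) ↦ (a / 2, b, c mod 2)` is a surjective
homomorphism from the even subgroup onto `ℤ × ℤ × ℤ/2`: the cross term `a b'` of the group law
is even. Its kernel consists of the central elements `(0, 0, 2k)`, and each of them is the
commutator of `(2, 0, 0)` and `(0, k, 0)`, so the kernel is exactly the commutator subgroup.
-/

noncomputable def Abelianization.mulEquivOfSurjective {G A : Type*} [Group G] [CommGroup A]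
    (f : G →* A) (hf : Function.Surjective f) (hker : f.ker ≤ commutator G) :
    Abelianization G ≃* A :=
  (QuotientGroup.quotientMulEquivOfEq
      (le_antisymm (Abelianization.commutator_subset_ker f) hker)).trans
    (QuotientGroup.quotientKerEquivOfSurjective f hf)

lemma ZMod.intCast_mul_eq_zero_of_even {a : ℤ} (ha : Even a) (b : ℤ) :
    ((a * b : ℤ) : ZMod 2) = 0 :=
  (ZMod.intCast_zmod_eq_zero_iff_dvd _ 2).mpr ((even_iff_two_dvd.mp ha).mul_right b)

namespace Heisenberg

open scoped commutatorElement

lemma commutatorElement_eq (x y : Heisenberg) :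
    ⁅x, y⁆ = ⟨0, 0, x.a * y.b - y.a * x.b⟩ := by
  simp only [commutatorElement_def, mul_def, inv_def, mk.injEq]
  refine ⟨by ring, by ring, by ring⟩

def evenProj : evenSubgroup →* Multiplicative (ℤ × ℤ × ZMod 2) where
  toFun x := .ofAdd ((x : Heisenberg).a / 2, (x : Heisenberg).b, ((x : Heisenberg).c : ZMod 2))
  map_one' := rfl
  map_mul' := by
    rintro ⟨⟨a, b, c⟩, ha⟩ ⟨⟨a', b', c'⟩, ha'⟩
    refine congrArg Multiplicative.ofAdd (Prod.ext ?_ (Prod.ext rfl ?_))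
    · show (a + a') / 2 = a / 2 + a' / 2
      obtain ⟨r, rfl⟩ := ha
      obtain ⟨s, rfl⟩ := ha'
      omega
    · show ((c + c' + a * b' : ℤ) : ZMod 2) = c + c'
      rw [Int.cast_add, ZMod.intCast_mul_eq_zero_of_even ha, add_zero, Int.cast_add]

lemma evenProj_surjective : Function.Surjective evenProj := by
  rintro ⟨m, n, c⟩
  refine ⟨⟨⟨2 * m, n, c.val⟩, even_two_mul m⟩, ?_⟩
  refine congrArg Multiplicative.ofAdd (Prod.ext ?_ (Prod.ext rfl ?_))
  · show 2 * m / 2 = m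
    omega
  · show ((c.val : ℤ) : ZMod 2) = c
    simp

lemma ker_evenProj_le_commutator : evenProj.ker ≤ commutator evenSubgroup := by
  rintro ⟨⟨a, b, c⟩, ha⟩ hx
  have h : (a / 2, b, (c : ZMod 2)) = (0, 0, 0) := congrArg Multiplicative.toAdd hx
  simp only [Prod.mk.injEq] at h
  obtain ⟨ha2, rfl, hc⟩ := h
  obtain ⟨k, rfl⟩ : (2 : ℤ) ∣ c := by
    exact_mod_cast (ZMod.intCast_zmod_eq_zero_iff_dvd c 2).mp hc
  obtain rfl : a = 0 := by
    obtain ⟨r, hr⟩ := ha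
    change a = r + r at hr
    omega
  have hcomm : (⟨⟨0, 0, 2 * k⟩, ha⟩ : evenSubgroup) =
      ⁅(⟨⟨2, 0, 0⟩, even_two⟩ : evenSubgroup), ⟨⟨0, k, 0⟩, ⟨0, rfl⟩⟩⁆ := by
    apply Subtype.ext
    change (⟨0, 0, 2 * k⟩ : Heisenberg) = ⁅(⟨2, 0, 0⟩ : Heisenberg), ⟨0, k, 0⟩⁆
    rw [commutatorElement_eq]
    simp
  rw [hcomm]
  exact Subgroup.commutator_mem_commutator (Subgroup.mem_top _) (Subgroup.mem_top _)

end Heisenberg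

theorem stmt_18 :
    Nonempty (Abelianization Heisenberg.evenSubgroup ≃*
      Multiplicative (ℤ × ℤ × ZMod 2)) :=
  ⟨Abelianization.mulEquivOfSurjective Heisenberg.evenProj Heisenberg.evenProj_surjective
    Heisenberg.ker_evenProj_le_commutator⟩
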